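/- Let B = [b_1,…,b_n] be a basis of a lattice L in ℝ^m with Gram–Schmidt orthogonalization b_1^*,…,b_n^*, and define the potential Pot(B) = ∏_{i=1}^n ‖b_i^*‖^{2(n−i+1)}. Then for 1 ≤ k ≤ ℓ ≤ n, Pot(σ_{k,ℓ} B) = Pot(B) · ∏_{i=k}^{ℓ} (‖π_i(b_ℓ)‖² / ‖π_i(b_i)‖²), where σ_{k,ℓ} B denotes the basis reordered by the deep-insertion permutation σ_{k,ℓ} and π_i is the orthogonal projection onto the orthogonal complement of span{b_1,…,b_{i−1}}. -/

import Mathlib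

/-!
The potential is a product of Gram determinants: the Gram determinant of a family is the product
of the squared norms of its Gram–Schmidt vectors, so `Pot B = ∏ⱼ det Gram(b₁, …, bⱼ)`. A Gram
determinant does not depend on the order of the family, and the prefix of length `j` of `σ_{k,ℓ} B`
is a reordering of the prefix of `B` unless `k ≤ j ≤ ℓ`, when it is a reordering of
`b₁, …, b_{j-1}, b_ℓ`. In that case only the last Gram–Schmidt factor changes, from `‖π_j(b_j)‖²`
to `‖π_j(b_ℓ)‖²`.
-/

open Finset

/-- π_j : orthogonal projection onto the orthogonal complement of span{b_0,…,b_{j-1}}. -/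
noncomputable def projPerp {n m : ℕ} (b : Fin n → EuclideanSpace ℝ (Fin m)) (j : ℕ)
    (x : EuclideanSpace ℝ (Fin m)) : EuclideanSpace ℝ (Fin m) :=
  x - (Submodule.orthogonalProjection (Submodule.span ℝ (b '' {i | (i : ℕ) < j})) x : EuclideanSpace ℝ (Fin m))

/-- The Gram–Schmidt vector b_i^* = π_i(b_i). -/
noncomputable def bstar {n m : ℕ} (b : Fin n → EuclideanSpace ℝ (Fin m)) (i : Fin n) :
    EuclideanSpace ℝ (Fin m) :=
  projPerp b i.val (b i)

/-- The potential Pot(B) = ∏ ‖b_i^*‖^{2(n-i+1)} (1-based), i.e. ∏ ‖b_i^*‖^{2(n-i)} (0-based). -/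
noncomputable def Pot {n m : ℕ} (b : Fin n → EuclideanSpace ℝ (Fin m)) : ℝ :=
  ∏ i : Fin n, ‖bstar b i‖ ^ (2 * (n - i.val))

/-- Gram–Schmidt coefficient μ_{i,j} = ⟨b_i, b_j^*⟩ / ⟨b_j^*, b_j^*⟩. -/
noncomputable def mu {n m : ℕ} (b : Fin n → EuclideanSpace ℝ (Fin m)) (i j : Fin n) : ℝ :=
  (inner ℝ (b i) (bstar b j) : ℝ) / (inner ℝ (bstar b j) (bstar b j) : ℝ)

/-- Size-reduced: |μ_{i,j}| ≤ 1/2 for all j < i. -/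
def SizeReduced {n m : ℕ} (b : Fin n → EuclideanSpace ℝ (Fin m)) : Prop :=
  ∀ i j : Fin n, j < i → |mu b i j| ≤ 1/2

/-- The deep-insertion reordering σ_{k,ℓ}B = [b_1,…,b_{k-1}, b_ℓ, b_k,…,b_{ℓ-1}, b_{ℓ+1},…,b_n]. -/
def insertFam {n : ℕ} {α : Type*} (b : Fin n → α) (k l : Fin n) : Fin n → α :=
  fun i => if i.val < k.val ∨ l.val < i.val then b i
    else if i = k then b l
    else b ⟨i.val - 1, lt_of_le_of_lt (Nat.sub_le _ _) i.isLt⟩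

open Matrix InnerProductSpace Submodule

theorem InnerProductSpace.gramSchmidt_eq_sub_starProjection {𝕜 E ι : Type*} [RCLike 𝕜]
    [NormedAddCommGroup E] [InnerProductSpace 𝕜 E] [LinearOrder ι] [LocallyFiniteOrderBot ι]
    [WellFoundedLT ι] (f : ι → E) (n : ι) [(span 𝕜 (f '' Set.Iio n)).HasOrthogonalProjection] :
    gramSchmidt 𝕜 f n = f n - (span 𝕜 (f '' Set.Iio n)).starProjection (f n) := by
  have hmem : f n - gramSchmidt 𝕜 f n ∈ span 𝕜 (f '' Set.Iio n) := by
    rw [← span_gramSchmidt_Iio 𝕜 f n, gramSchmidt_def 𝕜 f n, sub_sub_cancel]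
    refine sum_mem fun i hi => ?_
    have hle : (𝕜 ∙ gramSchmidt 𝕜 f i) ≤ span 𝕜 (gramSchmidt 𝕜 f '' Set.Iio n) :=
      span_mono (Set.singleton_subset_iff.mpr (Set.mem_image_of_mem _ (Finset.mem_Iio.mp hi)))
    exact hle (starProjection_apply_mem _ _)
  have hperp : span 𝕜 (f '' Set.Iio n) ≤ (𝕜 ∙ gramSchmidt 𝕜 f n)ᗮ := by
    rw [← span_gramSchmidt_Iio 𝕜 f n, span_le]
    rintro _ ⟨i, hi, rfl⟩
    exact mem_orthogonal_singleton_iff_inner_right.mpr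
      (gramSchmidt_orthogonal 𝕜 f hi.ne')
  rw [eq_sub_iff_add_eq, ← eq_sub_iff_add_eq']
  refine eq_starProjection_of_mem_of_inner_eq_zero hmem fun w hw => ?_
  rw [sub_sub_cancel]
  exact mem_orthogonal_singleton_iff_inner_right.mp (hperp hw)

section GramDeterminant

variable {E : Type*} [NormedAddCommGroup E] [InnerProductSpace ℝ E]

theorem Matrix.gram_eq_mul_diagonal_mul_transpose {ι : Type*} [Fintype ι] [DecidableEq ι]
    {u v : ι → E} (hu : Pairwise fun i j => ⟪u i, u j⟫_ℝ = 0) (L : Matrix ι ι ℝ)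
    (hv : ∀ i, v i = ∑ j, L i j • u j) :
    gram ℝ v = L * diagonal (fun j => ‖u j‖ ^ 2) * Lᵀ := by
  ext i k
  rw [gram_apply, hv i, hv k, mul_apply, sum_inner]
  refine Finset.sum_congr rfl fun j _ => ?_
  rw [mul_diagonal, transpose_apply, real_inner_smul_left, inner_sum,
    Finset.sum_eq_single j (fun l _ hlj => by rw [real_inner_smul_right, hu hlj.symm, mul_zero])
      (by simp), real_inner_smul_right, real_inner_self_eq_norm_sq]
  ring

theorem Matrix.det_gram_eq_prod_norm_gramSchmidt_sq {ι : Type*} [Fintype ι] [LinearOrder ι]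
    [LocallyFiniteOrderBot ι] (v : ι → E) :
    (gram ℝ v).det = ∏ i, ‖gramSchmidt ℝ v i‖ ^ 2 := by
  set u := gramSchmidt ℝ v
  let L : Matrix ι ι ℝ := of fun i j =>
    if j < i then ⟪u j, v i⟫_ℝ / ‖u j‖ ^ 2 else if j = i then 1 else 0
  have hL : L.IsLowerTriangular := fun i j (hij : i < j) => by
    simp [L, not_lt_of_gt hij, hij.ne']
  have hv : ∀ i, v i = ∑ j, L i j • u j := by
    intro i
    rw [gramSchmidt_def'' ℝ v i, ← Finset.filter_gt_eq_Iio, Finset.sum_filter]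
    have hsplit : ∀ j, L i j • u j =
        (if j < i then (⟪u j, v i⟫_ℝ / ‖u j‖ ^ 2) • u j else 0) + if i = j then u j else 0 := by
      intro j
      rcases lt_trichotomy j i with h | rfl | h
      · simp [L, h, h.ne']
      · simp [L]
      · simp [L, not_lt_of_gt h, h.ne, h.ne']
    rw [Finset.sum_congr rfl fun j _ => hsplit j, Finset.sum_add_distrib, Finset.sum_ite_eq,
      if_pos (Finset.mem_univ _), add_comm]
    simp [u]
  rw [gram_eq_mul_diagonal_mul_transpose (gramSchmidt_pairwise_orthogonal ℝ v) L hv, det_mul,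
    det_mul, det_transpose, det_diagonal, det_of_isLowerTriangular L hL]
  simp [L, u]

noncomputable def gramDet {ι : Type*} [DecidableEq ι] (b : ι → E) (s : Finset ι) : ℝ :=
  (gram ℝ fun i : s => b i).det

theorem gramDet_comp_equiv {ι ι' : Type*} [DecidableEq ι] [DecidableEq ι'] (b : ι → E)
    (e : ι' ≃ ι) (s : Finset ι') : gramDet (b ∘ e) s = gramDet b (s.map e.toEmbedding) := by
  have hs : ∀ x, x ∈ s ↔ e x ∈ s.map e.toEmbedding := fun x => by simp
  rw [gramDet, gramDet, ← det_submatrix_equiv_self (e.subtypeEquiv hs)]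
  rfl

theorem gramDet_eq_prod {ι : Type*} [LinearOrder ι] [LocallyFiniteOrderBot ι]
    [FiniteDimensional ℝ E] (b : ι → E) (s : Finset ι) :
    gramDet b s = ∏ i ∈ s, ‖b i - (span ℝ (b '' (↑s ∩ Set.Iio i))).starProjection (b i)‖ ^ 2 := by
  refine (det_gram_eq_prod_norm_gramSchmidt_sq _).trans ?_
  rw [← Finset.prod_coe_sort s]
  refine Finset.prod_congr rfl fun i _ => ?_
  have himage : (fun j : s => b j) '' Set.Iio i = b '' (↑s ∩ Set.Iio ↑i) := by
    ext x; simp [← Subtype.coe_lt_coe, and_comm]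
  rw [gramSchmidt_eq_sub_starProjection, himage]

theorem gramDet_insert_of_forall_lt {ι : Type*} [LinearOrder ι] [LocallyFiniteOrderBot ι]
    [FiniteDimensional ℝ E] (b : ι → E) {s : Finset ι} {a : ι} (h : ∀ i ∈ s, i < a) :
    gramDet b (insert a s) = gramDet b s * ‖b a - (span ℝ (b '' s)).starProjection (b a)‖ ^ 2 := by
  have ha : a ∉ s := fun ha => lt_irrefl a (h a ha)
  have hlast : ↑(insert a s) ∩ Set.Iio a = (s : Set ι) := by
    ext x
    simp only [Finset.coe_insert, Set.mem_inter_iff, Set.mem_insert_iff, Set.mem_Iio,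
      Finset.mem_coe]
    constructor
    · rintro ⟨rfl | hx, hxa⟩
      exacts [absurd hxa (lt_irrefl x), hx]
    · exact fun hx => ⟨Or.inr hx, h x hx⟩
  have hinit : ∀ i ∈ s, ↑(insert a s) ∩ Set.Iio i = ↑s ∩ Set.Iio i := fun i hi => by
    rw [Finset.coe_insert, Set.insert_inter_of_notMem (t := Set.Iio i) (not_lt_of_gt (h i hi))]
  rw [gramDet_eq_prod, gramDet_eq_prod, Finset.prod_insert ha, hlast, mul_comm,
    Finset.prod_congr rfl fun i hi => by rw [hinit i hi]]

end GramDeterminant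

theorem Fin.val_cycleIcc {n : ℕ} (k l x : Fin n) :
    (Fin.cycleIcc k l x : ℕ) =
      if x < k ∨ l < x then (x : ℕ) else if x = l then (k : ℕ) else x + 1 := by
  have := k.neZero
  rcases lt_or_ge x k with hxk | hkx
  · simp [Fin.cycleIcc_of_lt hxk, hxk]
  rcases lt_or_ge l x with hlx | hxl
  · simp [Fin.cycleIcc_of_gt hlx, hlx]
  rw [Fin.cycleIcc_of_le_of_le hkx hxl, if_neg (not_or.mpr ⟨not_lt.mpr hkx, not_lt.mpr hxl⟩)]
  split_ifs with hx
  · rfl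
  · exact Fin.val_add_one_of_lt' (by fin_omega)

theorem insertFam_eq_comp_symm_cycleIcc {n : ℕ} {α : Type*} (b : Fin n → α) (k l : Fin n) :
    insertFam b k l = b ∘ (Fin.cycleIcc k l).symm := by
  funext i
  obtain ⟨x, rfl⟩ := (Fin.cycleIcc k l).surjective i
  have hx := Fin.val_cycleIcc k l x
  rw [Function.comp_apply, Equiv.symm_apply_apply, insertFam]
  split_ifs at hx <;> split_ifs <;> congr 1 <;> ext <;> fin_omega

theorem map_symm_cycleIcc_Iic {n : ℕ} (k l j : Fin n) :
    (Iic j).map (Fin.cycleIcc k l).symm.toEmbedding =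
      if j ∈ Icc k l then insert l (Iio j) else Iic j := by
  ext x
  have hx := Fin.val_cycleIcc k l x
  rw [mem_map_equiv, Equiv.symm_symm, mem_Iic]
  split_ifs at hx <;> split_ifs with hj <;>
    simp only [mem_insert, mem_Iio, mem_Iic, mem_Icc] at hj ⊢ <;> fin_omega

theorem Fin.prod_prod_Iic_eq_prod_pow {M : Type*} [CommMonoid M] {n : ℕ} (f : Fin n → M) :
    ∏ j, ∏ i ∈ Iic j, f i = ∏ i, f i ^ (n - i) := by
  rw [prod_comm' (t' := univ) (s' := Ici) (by simp)]
  exact prod_congr rfl fun i _ => by rw [Finset.prod_const, Fin.card_Ici]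

section LatticeBasis

variable {n m : ℕ} (b : Fin n → EuclideanSpace ℝ (Fin m))

theorem projPerp_eq_sub_starProjection (j : Fin n) (x : EuclideanSpace ℝ (Fin m)) :
    projPerp b j x = x - (span ℝ (b '' Set.Iio j)).starProjection x :=
  rfl

theorem bstar_ne_zero (hb : LinearIndependent ℝ b) (j : Fin n) : bstar b j ≠ 0 := by
  rw [bstar, projPerp_eq_sub_starProjection, sub_ne_zero]
  exact fun h => hb.notMem_span_image Set.self_notMem_Iio (h ▸ starProjection_apply_mem _ _)

theorem gramDet_Iic_eq_prod (j : Fin n) : gramDet b (Iic j) = ∏ i ∈ Iic j, ‖bstar b i‖ ^ 2 := by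
  rw [gramDet_eq_prod]
  refine prod_congr rfl fun i hi => ?_
  rw [coe_Iic, Set.inter_eq_right.mpr (Set.Iio_subset_Iic_self.trans (Set.Iic_subset_Iic.mpr
    (mem_Iic.mp hi)))]
  rfl

theorem Pot_eq_prod_gramDet : Pot b = ∏ j, gramDet b (Iic j) := by
  simp_rw [gramDet_Iic_eq_prod, Fin.prod_prod_Iic_eq_prod_pow, ← pow_mul]
  rfl

theorem gramDet_insert_Iio {j l : Fin n} (hjl : j ≤ l) :
    gramDet b (insert l (Iio j)) = gramDet b (Iio j) * ‖projPerp b j (b l)‖ ^ 2 := by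
  rw [gramDet_insert_of_forall_lt b fun i hi => (mem_Iio.mp hi).trans_le hjl, coe_Iio]
  rfl

end LatticeBasis

theorem pot_insert_general {n m : ℕ} (b : Fin n → EuclideanSpace ℝ (Fin m))
    (hLI : LinearIndependent ℝ b) (k l : Fin n) :
    Pot (insertFam b k l) =
      Pot b * ∏ i ∈ Finset.Icc k l,
        ‖projPerp b i.val (b l)‖ ^ 2 / ‖projPerp b i.val (b i)‖ ^ 2 := by
  rw [insertFam_eq_comp_symm_cycleIcc, Pot_eq_prod_gramDet, Pot_eq_prod_gramDet,
    ← univ_inter (Icc k l), ← prod_ite_mem, ← prod_mul_distrib]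
  refine prod_congr rfl fun j _ => ?_
  rw [gramDet_comp_equiv, map_symm_cycleIcc_Iic]
  split_ifs with hj
  · have hbj : ‖projPerp b j (b j)‖ ^ 2 ≠ 0 :=
      pow_ne_zero 2 (norm_ne_zero_iff.mpr (bstar_ne_zero b hLI j))
    rw [gramDet_insert_Iio b (mem_Icc.mp hj).2, ← Iio_insert, gramDet_insert_Iio b le_rfl,
      mul_assoc, mul_div_cancel₀ _ hbj]
  · rw [mul_one]

/-- Pot(σ_{k,ℓ}B) = Pot(B) · ∏_{i=k}^{ℓ} ‖π_i(b_ℓ)‖² / ‖π_i(b_i)‖². -/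
theorem pot_insert {n m : ℕ} (b : Fin n → EuclideanSpace ℝ (Fin m))
    (hLI : LinearIndependent ℝ b) (k l : Fin n) (hkl : k ≤ l) :
    Pot (insertFam b k l) =
      Pot b * ∏ i ∈ Finset.Icc k l,
        ‖projPerp b i.val (b l)‖ ^ 2 / ‖projPerp b i.val (b i)‖ ^ 2 :=
  pot_insert_general b hLI k l
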